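/- arXiv:1412.0600 — 4 statements merged into one kernel-verified Lean document; each statement's English description precedes it below -/
import Mathlib

section
/- BellCoRe attack on the q-half: if in Garner's recombination S = S_q + q·((i_q·(S_p − S_q)) mod p) the value S_p is replaced by Ŝ_p with Ŝ_p ≢ S_p (mod p), yielding Ŝ, then gcd(N, S − Ŝ) = q. -/
/-!
Both recombinations share the term `S_q`, so `S - Ŝ = q · (a - â)` where `a, â ∈ [0, p)` are the
two Garner digits. Modulo `p` we have `a - â ≡ i_q · (S_p - Ŝ_p)`, and `i_q` is invertible
modulo `p`, so the fault makes `a - â` a non-multiple of the prime `p`, i.e. coprime to `p`.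
Hence `gcd(p q, q (a - â)) = q · gcd(p, a - â) = q`.
-/

theorem Int.isCoprime_of_mul_modEq_one {u v m : ℤ} (h : u * v ≡ 1 [ZMOD m]) : IsCoprime u m := by
  obtain ⟨k, hk⟩ := Int.modEq_iff_dvd.mp h.symm
  exact ⟨v, -k, by linarith⟩

theorem Int.gcd_mul_right_eq_natAbs_of_isCoprime {m n c : ℤ} (h : IsCoprime m c) :
    Int.gcd (m * n) (c * n) = n.natAbs := by
  rw [Int.gcd_mul_right, Int.isCoprime_iff_gcd_eq_one.mp h, one_mul]

theorem garner_digit_sub_modEq (m u x y z : ℤ) :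
    (u * (x - z)) % m - (u * (y - z)) % m ≡ u * (x - y) [ZMOD m] := by
  have h := (Int.mod_modEq (u * (x - z)) m).sub (Int.mod_modEq (u * (y - z)) m)
  rwa [show u * (x - z) - u * (y - z) = u * (x - y) by ring] at h

theorem isCoprime_garner_digit_sub {p iq Sp Sphat Sq : ℤ} (hp : Prime p) (hiq : IsCoprime iq p)
    (hfault : ¬ Sphat ≡ Sp [ZMOD p]) :
    IsCoprime p ((iq * (Sp - Sq)) % p - (iq * (Sphat - Sq)) % p) := by
  refine (hp.coprime_iff_not_dvd).mpr fun hdvd => hfault (Int.modEq_iff_dvd.mpr ?_)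
  have hmul : iq * (Sp - Sphat) ≡ 0 [ZMOD p] :=
    (garner_digit_sub_modEq p iq Sp Sphat Sq).symm.trans (Int.modEq_zero_iff_dvd.mpr hdvd)
  exact hiq.symm.dvd_of_dvd_mul_left (Int.modEq_zero_iff_dvd.mp hmul)

theorem bellcore_fault_on_Sp_general (p q : ℕ) (hp : p.Prime)
    (iq : ℤ) (hiq : iq * q ≡ 1 [ZMOD (p : ℤ)])
    (Sp Sq Sphat S Shat : ℤ)
    (hfault : ¬ (Sphat ≡ Sp [ZMOD (p : ℤ)]))
    (hS : S = Sq + (q : ℤ) * ((iq * (Sp - Sq)) % (p : ℤ)))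
    (hShat : Shat = Sq + (q : ℤ) * ((iq * (Sphat - Sq)) % (p : ℤ))) :
    Int.gcd ((p : ℤ) * q) (S - Shat) = q := by
  have hdigits := isCoprime_garner_digit_sub (Sq := Sq) (Nat.prime_iff_prime_int.mp hp)
    (Int.isCoprime_of_mul_modEq_one hiq) hfault
  have hsub : S - Shat =
      ((iq * (Sp - Sq)) % (p : ℤ) - (iq * (Sphat - Sq)) % (p : ℤ)) * q := by
    rw [hS, hShat]; ring
  rw [hsub, Int.gcd_mul_right_eq_natAbs_of_isCoprime hdigits, Int.natAbs_natCast]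

theorem bellcore_fault_on_Sp (p q : ℕ) (hp : p.Prime) (hq : q.Prime) (hpq : p ≠ q)
    (iq : ℤ) (hiq : iq * q ≡ 1 [ZMOD (p : ℤ)])
    (Sp Sq Sphat S Shat : ℤ)
    (hfault : ¬ (Sphat ≡ Sp [ZMOD (p : ℤ)]))
    (hS : S = Sq + (q : ℤ) * ((iq * (Sp - Sq)) % (p : ℤ)))
    (hShat : Shat = Sq + (q : ℤ) * ((iq * (Sphat - Sq)) % (p : ℤ))) :
    Int.gcd ((p : ℤ) * q) (S - Shat) = q :=
  bellcore_fault_on_Sp_general p q hp iq hiq Sp Sq Sphat S Shat hfault hS hShat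
end

section
/- Shamir's single-test invariant: if d_p' = d mod φ(p·r), d_q' = d mod φ(q·r) where p, q are distinct primes each coprime to r, then S'_p = M^{d_p'} mod (p·r) and S'_q = M^{d_q'} mod (q·r) satisfy S'_p ≡ S'_q (mod r) whenever gcd(M, r) = 1. -/
open Nat

/- Both residues are congruent modulo r to M ^ d: reducing a residue modulo p·r further modulo r
changes nothing, and since φ r ∣ φ (p·r), reducing the exponent modulo φ (p·r) does not change the
power of the unit M modulo r (Euler). The same holds for q, whence the invariant. -/

theorem Int.pow_modEq_pow_of_modEq_totient {M : ℤ} {n : ℕ} (hM : IsCoprime M n) {a b : ℕ}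
    (hab : a ≡ b [MOD φ n]) : M ^ a ≡ M ^ b [ZMOD n] := by
  have hEuler := ZMod.pow_totient (ZMod.unitOfIsCoprime M hM)
  rw [← ZMod.intCast_eq_intCast_iff, Int.cast_pow, Int.cast_pow,
    ← ZMod.coe_unitOfIsCoprime M hM, ← Units.val_pow_eq_pow_val, ← Units.val_pow_eq_pow_val,
    pow_eq_pow_mod a hEuler, pow_eq_pow_mod b hEuler, hab]

theorem Int.pow_mod_totient_mul_emod_modEq {M : ℤ} {r : ℕ} (hM : IsCoprime M r) (m d : ℕ) :
    M ^ (d % φ (m * r)) % ((m : ℤ) * r) ≡ M ^ d [ZMOD r] := by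
  have hexp : d % φ (m * r) ≡ d [MOD φ r] :=
    (Nat.mod_modEq d _).of_dvd (totient_dvd_of_dvd (Nat.dvd_mul_left r m))
  exact (Int.emod_emod_of_dvd _ (Int.dvd_mul_left _ _)).trans
    (Int.pow_modEq_pow_of_modEq_totient hM hexp)

theorem shamir_invariant_general (p q r : ℕ)
    (M : ℤ) (hM : Int.gcd M (r : ℤ) = 1) (d : ℕ)
    (S'p S'q : ℤ)
    (hS'p : S'p = M ^ (d % Nat.totient (p * r)) % ((p : ℤ) * r))
    (hS'q : S'q = M ^ (d % Nat.totient (q * r)) % ((q : ℤ) * r)) :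
    S'p ≡ S'q [ZMOD (r : ℤ)] := by
  have hMr : IsCoprime M r := Int.isCoprime_iff_gcd_eq_one.mpr hM
  rw [hS'p, hS'q]
  exact (Int.pow_mod_totient_mul_emod_modEq hMr p d).trans
    (Int.pow_mod_totient_mul_emod_modEq hMr q d).symm

theorem shamir_invariant (p q r : ℕ) (hp : p.Prime) (hq : q.Prime) (hpq : p ≠ q)
    (hr : 0 < r) (hrp : Nat.Coprime r p) (hrq : Nat.Coprime r q)
    (M : ℤ) (hM : Int.gcd M (r : ℤ) = 1) (d : ℕ)
    (S'p S'q : ℤ)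
    (hS'p : S'p = M ^ (d % Nat.totient (p * r)) % ((p : ℤ) * r))
    (hS'q : S'q = M ^ (d % Nat.totient (q * r)) % ((q : ℤ) * r)) :
    S'p ≡ S'q [ZMOD (r : ℤ)] :=
  shamir_invariant_general p q r M hM d S'p S'q hS'p hS'q
end

section
/- Coprime factorization of λ(N): if p, q are distinct odd primes, there exist coprime positive integers p₂, q₂ with p₂·q₂ = lcm(p−1, q−1), such that (p−1)/gcd(p−1,q−1) divides p₂ and (q−1)/gcd(p−1,q−1) divides q₂. -/
/-!
Split `lcm a b` prime by prime into `Nat.factorizationLCMLeft a b`, the prime powers in which `a`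
has the larger exponent, and `Nat.factorizationLCMRight a b`, which divides `b`. Since
`a / gcd a b = lcm a b / b`, the quotient `a / gcd a b` divides the complementary factor
`lcm a b / factorizationLCMRight a b = factorizationLCMLeft a b`, and symmetrically for `b`.
-/

theorem Nat.div_gcd_mul_eq_lcm (a b : ℕ) : a / gcd a b * b = lcm a b := by
  rw [Nat.lcm, Nat.div_mul_right_comm (gcd_dvd_left a b)]

theorem Nat.div_gcd_dvd_of_mul_eq_lcm {a b l r : ℕ} (hb : b ≠ 0) (hlr : l * r = lcm a b)
    (hr : r ∣ b) : a / gcd a b ∣ l := by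
  obtain ⟨k, rfl⟩ := hr
  have hr0 : 0 < r := Nat.pos_of_ne_zero (left_ne_zero_of_mul hb)
  have h : a / gcd a (r * k) * k * r = l * r := by
    rw [hlr, ← div_gcd_mul_eq_lcm]
    ring
  exact Dvd.intro k (Nat.eq_of_mul_eq_mul_right hr0 h)

theorem coprime_factorization_of_lambda_general (p q : ℕ) (hp : p.Prime) (hq : q.Prime) :
    ∃ p₂ q₂ : ℕ, 0 < p₂ ∧ 0 < q₂ ∧ Nat.Coprime p₂ q₂ ∧
      p₂ * q₂ = Nat.lcm (p - 1) (q - 1) ∧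
      ((p - 1) / Nat.gcd (p - 1) (q - 1)) ∣ p₂ ∧
      ((q - 1) / Nat.gcd (p - 1) (q - 1)) ∣ q₂ := by
  set a := p - 1
  set b := q - 1
  have ha : a ≠ 0 := Nat.sub_ne_zero_of_lt hp.one_lt
  have hb : b ≠ 0 := Nat.sub_ne_zero_of_lt hq.one_lt
  have hlr := Nat.factorizationLCMLeft_mul_factorizationLCMRight ha hb
  refine ⟨_, _, Nat.factorizationLCMLeft_pos a b, Nat.factorizationLCMRight_pos a b,
    Nat.coprime_factorizationLCMLeft_factorizationLCMRight a b, hlr,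
    Nat.div_gcd_dvd_of_mul_eq_lcm hb hlr (Nat.factorizationLCMRight_dvd_right a b), ?_⟩
  rw [Nat.gcd_comm]
  refine Nat.div_gcd_dvd_of_mul_eq_lcm ha ?_ (Nat.factorizationLCMLeft_dvd_left a b)
  rw [mul_comm, hlr, Nat.lcm_comm]

theorem coprime_factorization_of_lambda (p q : ℕ) (hp : p.Prime) (hq : q.Prime)
    (hpq : p ≠ q) (hp2 : p ≠ 2) (hq2 : q ≠ 2) :
    ∃ p₂ q₂ : ℕ, 0 < p₂ ∧ 0 < q₂ ∧ Nat.Coprime p₂ q₂ ∧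
      p₂ * q₂ = Nat.lcm (p - 1) (q - 1) ∧
      ((p - 1) / Nat.gcd (p - 1) (q - 1)) ∣ p₂ ∧
      ((q - 1) / Nat.gcd (p - 1) (q - 1)) ∣ q₂ :=
  coprime_factorization_of_lambda_general p q hp hq
end

section
/- Blömer et al.'s invariant: if e'_p·d'_p ≡ 1 (mod φ(p·r₁)) with p prime, r₁ coprime to p, gcd(M, p·r₁) = 1, and S' ≡ M^{d'_p} (mod p·r₁), then M ≡ S'^{e'_p} (mod r₁). -/
theorem blomer_invariant (p r₁ : ℕ) (hp : p.Prime) (hr : 0 < r₁)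
    (hcop : Nat.Coprime r₁ p)
    (M : ℤ) (hM : Int.gcd M ((p : ℤ) * r₁) = 1)
    (d' e' : ℕ) (hed : e' * d' ≡ 1 [MOD Nat.totient (p * r₁)])
    (S' : ℤ) (hS' : S' ≡ M ^ d' [ZMOD ((p : ℤ) * r₁)]) :
    M ≡ S' ^ e' [ZMOD (r₁ : ℤ)] := by
  set n := p * r₁ with hn
  have hncast : ((p : ℤ) * r₁) = ((n : ℕ) : ℤ) := by push_cast [hn]; ring
  have hn2 : 2 ≤ n := by
    have := hp.two_le
    calc 2 ≤ p := this
    _ = p * 1 := by ring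
    _ ≤ p * r₁ := Nat.mul_le_mul_left p hr
  -- M is a unit in ZMod n
  have hco : IsCoprime M ((n : ℕ) : ℤ) := by
    rw [← hncast, Int.isCoprime_iff_gcd_eq_one]; exact hM
  have hu : IsUnit ((M : ZMod n)) := by
    have h := hco.map (Int.castRingHom (ZMod n))
    have h0 : ((Int.castRingHom (ZMod n)) ((n : ℕ) : ℤ)) = 0 := by simp
    rw [h0] at h
    exact isCoprime_zero_right.mp h
  -- Euler's theorem
  have hpow : (M : ZMod n) ^ Nat.totient n = 1 := by
    have h1 := ZMod.pow_totient hu.unit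
    have h2 := congrArg (Units.val) h1
    rwa [Units.val_pow_eq_pow_val, IsUnit.unit_spec, Units.val_one] at h2
  -- translate the S' congruence into ZMod n
  rw [hncast] at hS'
  have hS'' : ((S' : ZMod n)) = ((M : ZMod n)) ^ d' := by
    have := (ZMod.intCast_eq_intCast_iff _ _ _).mpr hS'
    simpa using this
  -- main congruence in ZMod n
  have hmain : ((M : ZMod n)) = ((S' : ZMod n)) ^ e' := by
    rw [hS'', ← pow_mul, mul_comm d' e']
    rcases Nat.lt_or_ge 1 (Nat.totient n) with hφ | hφ
    · have h0 : e' * d' % Nat.totient n = 1 % Nat.totient n := hed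
      rw [Nat.mod_eq_of_lt hφ] at h0
      obtain ⟨k, hk⟩ : ∃ k, e' * d' = 1 + Nat.totient n * k := by
        have := Nat.div_add_mod (e' * d') (Nat.totient n)
        exact ⟨e' * d' / Nat.totient n, by omega⟩
      rw [hk, pow_add, pow_mul, hpow, one_pow, pow_one, mul_one]
    · have hφpos : 0 < Nat.totient n := Nat.totient_pos.mpr (by omega)
      have hφ1 : Nat.totient n = 1 := by omega
      have hM1 : (M : ZMod n) = 1 := by
        rw [← pow_one ((M : ZMod n)), ← hφ1]; exact hpow
      rw [hM1, one_pow]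
  -- back to integers mod n
  have hmod : M ≡ S' ^ e' [ZMOD ((n : ℕ) : ℤ)] := by
    rw [← ZMod.intCast_eq_intCast_iff]
    push_cast
    exact hmain
  have hdvd : (r₁ : ℤ) ∣ ((n : ℕ) : ℤ) := by
    rw [← hncast]; exact ⟨p, by ring⟩
  exact hmod.of_dvd hdvd
end
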